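/- Let X be a topological space, E ⊆ X a pseudocompact subset, and (f_n) a sequence of continuous real-valued functions on X that converges pointwise on E. Then there exists a functionally closed set F ⊆ X with E ⊆ F such that (f_n) converges pointwise on F. -/
import Mathlib


open Set Filter Topology

theorem stmt1 {X : Type*} [TopologicalSpace X] (E : Set X)
    (hE : ∀ u : E → ℝ, Continuous u → ∃ M : ℝ, ∀ x : E, |u x| ≤ M)
    (f : ℕ → X → ℝ) (hf : ∀ n, Continuous (f n))
    (hconv : ∀ x ∈ E, ∃ L : ℝ, Tendsto (fun n => f n x) atTop (𝓝 L)) :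
    ∃ F : Set X, (∃ φ : X → ℝ, Continuous φ ∧ F = φ ⁻¹' {0}) ∧ E ⊆ F ∧
      ∀ x ∈ F, ∃ L : ℝ, Tendsto (fun n => f n x) atTop (𝓝 L) := by
  rcases E.eq_empty_or_nonempty with rfl | ⟨x₀, hx₀⟩
  · exact ⟨∅, ⟨fun _ => 1, continuous_const, by simp⟩, by simp, by simp⟩
  letI : MetricSpace (ℕ → ℝ) := TopologicalSpace.metrizableSpaceMetric _
  set Φ : X → ℕ → ℝ := fun x n => f n x with hΦ
  have hΦc : Continuous Φ := continuous_pi fun n => hf n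
  set K : Set (ℕ → ℝ) := Φ '' E with hK
  have hKne : K.Nonempty := ⟨Φ x₀, mem_image_of_mem _ hx₀⟩
  have hKclosed : IsClosed K := by
    rw [← closure_subset_iff_isClosed]
    intro y hy
    by_contra hyK
    set u : E → ℝ := fun x => (dist (Φ x.1) y)⁻¹ with hu
    have hne : ∀ x : E, dist (Φ x.1) y ≠ 0 := by
      intro x h
      exact hyK (dist_eq_zero.mp h ▸ mem_image_of_mem _ x.2)
    have huc : Continuous u := by
      apply Continuous.inv₀
      · exact (continuous_dist.comp ((hΦc.comp continuous_subtype_val).prodMk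
          continuous_const))
      · exact hne
    obtain ⟨M, hM⟩ := hE u huc
    have hε : (0:ℝ) < (|M| + 1)⁻¹ := by positivity
    obtain ⟨b, hbK, hby⟩ := Metric.mem_closure_iff.mp hy _ hε
    obtain ⟨x, hxE, rfl⟩ := hbK
    have hd0 : 0 < dist (Φ x) y := lt_of_le_of_ne dist_nonneg
      (Ne.symm (hne ⟨x, hxE⟩))
    have h1 : |M| + 1 < (dist (Φ x) y)⁻¹ := by
      rw [← inv_inv (|M| + 1)]
      apply inv_strictAnti₀ hd0
      rwa [dist_comm] at hby
    have h2 : |u ⟨x, hxE⟩| ≤ M := hM _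
    have h3 : u ⟨x, hxE⟩ = (dist (Φ x) y)⁻¹ := rfl
    have : (dist (Φ x) y)⁻¹ ≤ M := le_trans (le_abs_self _) (h3 ▸ h2)
    linarith [le_abs_self M]
  refine ⟨Φ ⁻¹' K, ⟨fun x => Metric.infDist (Φ x) K,
    (Metric.continuous_infDist_pt K).comp hΦc, ?_⟩, fun x hx => mem_image_of_mem _ hx, ?_⟩
  · ext x
    simp only [mem_preimage, mem_singleton_iff]
    exact (hKclosed.mem_iff_infDist_zero hKne)
  · rintro x hx
    obtain ⟨x', hx'E, hx'⟩ := hx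
    have : ∀ n, f n x = f n x' := fun n => (congrFun hx' n).symm
    obtain ⟨L, hL⟩ := hconv x' hx'E
    exact ⟨L, by simpa only [this] using hL⟩
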